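/- Let f^{[α]}, g^{[β]} ∈ I^{[Σ]} with f, g ≠ 0, let a = (m1⊗n1, m2⊗n2) ∈ amb(f^{[α]}, g^{[β]}), and let h^{[γ]} = S-Pol(a). Then LM(h) < LM(a), and sig(γ) ⪯ SIG(a), with sig(γ) = SIG(a) if and only if the ambiguity a is regular, and sig(γ) ≺ SIG(a) if and only if a is singular. -/

import Mathlib

/-!  Signature Gröbner bases in the mixed algebra `R[x₁,…,x_k]⟨y₁,…,y_n⟩`
over a principal ideal domain `R`, following Hofstadler–Verron. -/

open Finsupp

/-- A mixed monomial `v·w`, with `v` a commutative monomial in `x₁,…,x_k`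
(recorded by its exponent vector) and `w` a word in the noncommutative
variables `y₁,…,y_n`. -/
@[ext]
structure MMon (k n : ℕ) where
  c : Fin k →₀ ℕ
  w : FreeMonoid (Fin n)

namespace MMon

instance (k n : ℕ) : One (MMon k n) := ⟨⟨0, 1⟩⟩
noncomputable instance (k n : ℕ) : Mul (MMon k n) := ⟨fun a b => ⟨a.c + b.c, a.w * b.w⟩⟩

@[simp] lemma mul_c {k n : ℕ} (a b : MMon k n) : (a * b).c = a.c + b.c := rfl
@[simp] lemma mul_w {k n : ℕ} (a b : MMon k n) : (a * b).w = a.w * b.w := rfl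
@[simp] lemma one_c {k n : ℕ} : (1 : MMon k n).c = 0 := rfl
@[simp] lemma one_w {k n : ℕ} : (1 : MMon k n).w = 1 := rfl

noncomputable instance (k n : ℕ) : Monoid (MMon k n) where
  mul_assoc a b c := by ext : 1 <;> simp [add_assoc, mul_assoc]
  one_mul a := by ext : 1 <;> simp
  mul_one a := by ext : 1 <;> simp

end MMon

/-- A module monomial `u·a·ε_i·b` of the free bimodule `Σ = (A ⊗_{R[X]} A)^r`. -/
@[ext]
structure ModMon (k n r : ℕ) where
  u : Fin k →₀ ℕ
  a : FreeMonoid (Fin n)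
  i : Fin r
  b : FreeMonoid (Fin n)

instance {k n r : ℕ} [NeZero r] : Inhabited (ModMon k n r) := ⟨⟨0, 1, default, 1⟩⟩

/-- The mixed algebra `A = R[x₁,…,x_k]⟨y₁,…,y_n⟩`, realised as the monoid
algebra of the monoid of mixed monomials. -/
abbrev MixedAlg (R : Type) [CommRing R] (k n : ℕ) : Type := MonoidAlgebra R (MMon k n)

/-- The free `A`-bimodule `Σ = (A ⊗_{R[X]} A)^r`, realised as the free
`R`-module on the module monomials `u·a·ε_i·b`. -/
abbrev SigModule (R : Type) [CommRing R] (k n r : ℕ) : Type := ModMon k n r →₀ R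

section Defs

variable {R : Type} [CommRing R] {k n r : ℕ}

/-- The term `c·m` of `A` (an element of `T(A)` when `c ≠ 0`). -/
noncomputable def trm (m : MMon k n) (c : R) : MixedAlg R k n := MonoidAlgebra.single m c

/-- The word `b ∈ ⟨Y⟩`, viewed as an element of `A`. -/
noncomputable def wrd (b : FreeMonoid (Fin n)) : MixedAlg R k n :=
  MonoidAlgebra.single ⟨0, b⟩ 1

/-- Multiplication `m·σ` of a module monomial by a mixed monomial on the left. -/
noncomputable def mulL (m : MMon k n) (σ : ModMon k n r) : ModMon k n r :=
  ⟨m.c + σ.u, m.w * σ.a, σ.i, σ.b⟩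

/-- Multiplication `σ·m` of a module monomial by a mixed monomial on the right. -/
noncomputable def mulR (σ : ModMon k n r) (m : MMon k n) : ModMon k n r :=
  ⟨σ.u + m.c, σ.a, σ.i, σ.b * m.w⟩

/-- The two-sided multiple `m·σ·b` of a module monomial by a mixed monomial `m`
on the left and a word `b` on the right. -/
noncomputable def mulLR (m : MMon k n) (σ : ModMon k n r) (b : FreeMonoid (Fin n)) : ModMon k n r :=
  ⟨m.c + σ.u, m.w * σ.a, σ.i, σ.b * b⟩

/-- The left action of `A` on the bimodule `Σ`. -/
noncomputable def actL (f : MixedAlg R k n) (α : SigModule R k n r) : SigModule R k n r :=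
  Finsupp.sum f.coeff fun m cm => Finsupp.sum α fun σ cσ => Finsupp.single (mulL m σ) (cm * cσ)

/-- The right action of `A` on the bimodule `Σ`. -/
noncomputable def actR (α : SigModule R k n r) (f : MixedAlg R k n) : SigModule R k n r :=
  Finsupp.sum f.coeff fun m cm => Finsupp.sum α fun σ cσ => Finsupp.single (mulR σ m) (cσ * cm)

/-- The two-sided multiple `t·α·b` of `α ∈ Σ` by the term `t = c·m` on the left
and the word `b` on the right. -/
noncomputable def scaleLR (m : MMon k n) (c : R) (α : SigModule R k n r)
    (b : FreeMonoid (Fin n)) : SigModule R k n r :=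
  Finsupp.sum α fun σ cσ => Finsupp.single (mulLR m σ b) (c * cσ)

/-- The `A`-bimodule homomorphism `Σ → A`, `α ↦ ᾱ`, sending `ε_i` to `f_i`
(where `F i = f_i` are the generators). -/
noncomputable def barMap (F : Fin r → MixedAlg R k n) (α : SigModule R k n r) :
    MixedAlg R k n :=
  Finsupp.sum α fun σ cσ =>
    trm ⟨σ.u, σ.a⟩ cσ * F σ.i * wrd σ.b

/-- The basis vector `ε_i` of `Σ`. -/
noncomputable def epsMod (i : Fin r) : SigModule R k n r :=
  Finsupp.single ⟨0, 1, i, 1⟩ 1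

/-- The labeled module `I^{[Σ]}`: pairs `f^{[α]}` with `ᾱ = f`. -/
def Labeled (F : Fin r → MixedAlg R k n) (p : MixedAlg R k n × SigModule R k n r) : Prop :=
  barMap F p.2 = p.1

/-- A syzygy of `I^{[Σ]}`: an element `α ∈ Σ` with `ᾱ = 0`. -/
def IsSyzygy (F : Fin r → MixedAlg R k n) (γ : SigModule R k n r) : Prop :=
  barMap F γ = 0

section Orders

variable [LinearOrder (MMon k n)] [LinearOrder (ModMon k n r)]

/-- The leading monomial of `f ∈ A` (with `LM 0 = ⊥`). -/
noncomputable def LMb (f : MixedAlg R k n) : WithBot (MMon k n) := f.coeff.support.max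

/-- The leading monomial of `f ∈ A` (defaulting to `1` for `f = 0`). -/
noncomputable def LMd (f : MixedAlg R k n) : MMon k n := WithBot.unbotD 1 (f.coeff.support.max)

/-- The leading coefficient of `f ∈ A` (`0` for `f = 0`). -/
noncomputable def LC (f : MixedAlg R k n) : R := f.coeff (LMd f)

/-- The leading term of `f ∈ A`, as an element of `A` (`0` for `f = 0`). -/
noncomputable def LTerm (f : MixedAlg R k n) : MixedAlg R k n := trm (LMd f) (LC f)

/-- The signature monomial of `α ∈ Σ` (with `⊥` for `α = 0`): the `⪯`-largest
monomial of the support of `α`. -/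
noncomputable def sigb (α : SigModule R k n r) : WithBot (ModMon k n r) := α.support.max

variable [NeZero r]

/-- The signature monomial of `α ∈ Σ`, defaulting for `α = 0`. -/
noncomputable def sigMd (α : SigModule R k n r) : ModMon k n r :=
  WithBot.unbotD default (α.support.max)

/-- The coefficient of the signature of `α`. -/
noncomputable def sigC (α : SigModule R k n r) : R := α (sigMd α)

/-- The signature `sig(α)` of `α ∈ Σ`, as a term, i.e. a single-term element of
`Σ` (`0` for `α = 0`).  Equality `sig α = sig β` of signatures as *terms* is
`sigT α = sigT β`; the relation `sig α ≃ sig β` is `sigb α = sigb β`; the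
relation `sig α ≺ sig β` is `sigb α < sigb β`. -/
noncomputable def sigT (α : SigModule R k n r) : SigModule R k n r :=
  Finsupp.single (sigMd α) (sigC α)

end Orders

/-- The compatibility requirements on the chosen monomial ordering on `M(A)`
and module ordering on `M(Σ)`: both are compatible with multiplication,
both are well-orderings, and they are compatible with each other. -/
structure IsOrderSetting (k n r : ℕ) [LinearOrder (MMon k n)]
    [LinearOrder (ModMon k n r)] : Prop where
  mon_wf : WellFounded ((· < ·) : MMon k n → MMon k n → Prop)
  mod_wf : WellFounded ((· < ·) : ModMon k n r → ModMon k n r → Prop)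
  mon_mul : ∀ a b m m' : MMon k n, m ≤ m' → a * m * b ≤ a * m' * b
  mod_mul : ∀ (m : MMon k n) (b : FreeMonoid (Fin n)) (σ τ : ModMon k n r),
      σ ≤ τ → mulLR m σ b ≤ mulLR m τ b
  compat₁ : ∀ (u v : Fin k →₀ ℕ) (a b : FreeMonoid (Fin n)) (i : Fin r),
      (⟨u, a⟩ : MMon k n) < ⟨v, b⟩ ↔ (⟨u, a, i, 1⟩ : ModMon k n r) < ⟨v, b, i, 1⟩
  compat₂ : ∀ (u v : Fin k →₀ ℕ) (a b : FreeMonoid (Fin n)) (i : Fin r),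
      (⟨u, a⟩ : MMon k n) < ⟨v, b⟩ ↔ (⟨u, 1, i, a⟩ : ModMon k n r) < ⟨v, 1, i, b⟩

end Defs

/-! ### Ambiguities -/

/-- `WordAmb a b c d p q` says that `(a ⊗ b, c ⊗ d, p, q)` is an ambiguity
(overlap, inclusion or external) of the words `p` and `q`. -/
inductive WordAmb {n : ℕ} :
    FreeMonoid (Fin n) → FreeMonoid (Fin n) → FreeMonoid (Fin n) → FreeMonoid (Fin n) →
    FreeMonoid (Fin n) → FreeMonoid (Fin n) → Prop
  | overlap₁ (a b p q : FreeMonoid (Fin n)) (h : a * p = q * b)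
      (ha : a ≠ 1) (hb : b ≠ 1) (hla : a.length < q.length) (hlb : b.length < p.length) :
      WordAmb a 1 1 b p q
  | overlap₂ (a b p q : FreeMonoid (Fin n)) (h : p * a = b * q)
      (ha : a ≠ 1) (hb : b ≠ 1) (hla : a.length < q.length) (hlb : b.length < p.length) :
      WordAmb 1 a b 1 p q
  | inclusion₁ (a b p q : FreeMonoid (Fin n)) (h : p = a * q * b) :
      WordAmb 1 1 a b p q
  | inclusion₂ (a b p q : FreeMonoid (Fin n)) (h : a * p * b = q) :
      WordAmb a b 1 1 p q
  | external₁ (m p q : FreeMonoid (Fin n)) :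
      WordAmb 1 (m * q) (p * m) 1 p q
  | external₂ (m p q : FreeMonoid (Fin n)) :
      WordAmb (q * m) 1 1 (m * p) p q

section Amb

variable {R : Type} [CommRing R] {k n r : ℕ}
variable [LinearOrder (MMon k n)] [LinearOrder (ModMon k n r)]

/-- `IsAmb f g m₁ n₁ m₂ n₂` says that `(m₁ ⊗ n₁, m₂ ⊗ n₂)` is an ambiguity of the
(nonzero) polynomials `f` and `g`: an ambiguity of the word parts of their
leading monomials, with left cofactors completed by `lcm(u,v)/u` resp.
`lcm(u,v)/v` on the commutative parts. -/
def IsAmb (f g : MixedAlg R k n) (m₁ : MMon k n) (n₁ : FreeMonoid (Fin n))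
    (m₂ : MMon k n) (n₂ : FreeMonoid (Fin n)) : Prop :=
  ∃ a b c d : FreeMonoid (Fin n),
    WordAmb a b c d (LMd f).w (LMd g).w ∧
    m₁ = ⟨((LMd f).c ⊔ (LMd g).c) - (LMd f).c, a⟩ ∧ n₁ = b ∧
    m₂ = ⟨((LMd f).c ⊔ (LMd g).c) - (LMd g).c, c⟩ ∧ n₂ = d

/-- The leading monomial `LM(a) = LM(m₁ f n₁) = LM(m₂ g n₂)` of an ambiguity. -/
noncomputable def ambLM (f : MixedAlg R k n) (m₁ : MMon k n) (n₁ : FreeMonoid (Fin n)) :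
    MMon k n :=
  m₁ * LMd f * ⟨0, n₁⟩

variable [IsDomain R] [GCDMonoid R]

/-- The cofactor `lcmlc(f,g)/LC(f)`. -/
noncomputable def cofL (f g : MixedAlg R k n) : R :=
  Classical.choose (dvd_lcm_left (LC f) (LC g))

/-- The cofactor `lcmlc(f,g)/LC(g)`. -/
noncomputable def cofR (f g : MixedAlg R k n) : R :=
  Classical.choose (dvd_lcm_right (LC f) (LC g))

variable [NeZero r]

/-- The signature `SIG(a) = max(sig(c_f m₁ α n₁), −sig(c_g m₂ β n₂))` (first in
case of tie) of an ambiguity `a = (m₁ ⊗ n₁, m₂ ⊗ n₂)` of `f^{[α]]`, `g^{[β]}`,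
as a term (single-term element) of `Σ`. -/
noncomputable def ambSIG (f g : MixedAlg R k n) (α β : SigModule R k n r)
    (m₁ : MMon k n) (n₁ : FreeMonoid (Fin n)) (m₂ : MMon k n) (n₂ : FreeMonoid (Fin n)) :
    SigModule R k n r :=
  if sigb (scaleLR m₂ (cofR f g) β n₂) ≤ sigb (scaleLR m₁ (cofL f g) α n₁) then
    sigT (scaleLR m₁ (cofL f g) α n₁)
  else
    - sigT (scaleLR m₂ (cofR f g) β n₂)

/-- An ambiguity is regular if `sig(m₁ α n₁) ≄ sig(m₂ β n₂)`. -/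
def RegAmb (α β : SigModule R k n r) (m₁ : MMon k n) (n₁ : FreeMonoid (Fin n))
    (m₂ : MMon k n) (n₂ : FreeMonoid (Fin n)) : Prop :=
  sigb (scaleLR m₁ (1 : R) α n₁) ≠ sigb (scaleLR m₂ (1 : R) β n₂)

/-- An ambiguity is singular if `sig(c_f m₁ α n₁) = sig(c_g m₂ β n₂)`. -/
def SingAmb (f g : MixedAlg R k n) (α β : SigModule R k n r) (m₁ : MMon k n)
    (n₁ : FreeMonoid (Fin n)) (m₂ : MMon k n) (n₂ : FreeMonoid (Fin n)) : Prop :=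
  sigT (scaleLR m₁ (cofL f g) α n₁) = sigT (scaleLR m₂ (cofR f g) β n₂)

/-- The polynomial part of the S-polynomial of an ambiguity. -/
noncomputable def SPolP (f g : MixedAlg R k n) (m₁ : MMon k n) (n₁ : FreeMonoid (Fin n))
    (m₂ : MMon k n) (n₂ : FreeMonoid (Fin n)) : MixedAlg R k n :=
  trm m₁ (cofL f g) * f * wrd n₁ - trm m₂ (cofR f g) * g * wrd n₂

/-- The module part of the S-polynomial of an ambiguity. -/
noncomputable def SPolM (f g : MixedAlg R k n) (α β : SigModule R k n r) (m₁ : MMon k n)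
    (n₁ : FreeMonoid (Fin n)) (m₂ : MMon k n) (n₂ : FreeMonoid (Fin n)) :
    SigModule R k n r :=
  scaleLR m₁ (cofL f g) α n₁ - scaleLR m₂ (cofR f g) β n₂

/-- The polynomial part of the G-polynomial of an ambiguity, w.r.t. Bézout
coefficients `c`, `d`. -/
noncomputable def GPolP (c d : R) (f g : MixedAlg R k n) (m₁ : MMon k n)
    (n₁ : FreeMonoid (Fin n)) (m₂ : MMon k n) (n₂ : FreeMonoid (Fin n)) : MixedAlg R k n :=
  trm m₁ c * f * wrd n₁ + trm m₂ d * g * wrd n₂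

/-- The module part of the G-polynomial of an ambiguity, w.r.t. Bézout
coefficients `c`, `d`. -/
noncomputable def GPolM (c d : R) (α β : SigModule R k n r) (m₁ : MMon k n)
    (n₁ : FreeMonoid (Fin n)) (m₂ : MMon k n) (n₂ : FreeMonoid (Fin n)) :
    SigModule R k n r :=
  scaleLR m₁ c α n₁ + scaleLR m₂ d β n₂

/-- `BezoutFor c d f g`: `c, d` are Bézout coefficients for `LC f`, `LC g`. -/
def BezoutFor (c d : R) (f g : MixedAlg R k n) : Prop :=
  c * LC f + d * LC g = gcd (LC f) (LC g)

end Amb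

/-! ### Reductions, bases, cover -/

section Red

variable {R : Type} [CommRing R] {k n r : ℕ}
variable [LinearOrder (MMon k n)] [LinearOrder (ModMon k n r)]

/-- `f^{[α]}` is (top) sig-reducible by `G`: there are `g^{[β]} ∈ G`, a term
`t = c·m` and a word `b` with `LT(t g b) = LT(f) > LT(f - t g b)` and
`sig(t β b) ⪯ sig(α)`. -/
def SigReducible (G : Set (MixedAlg R k n × SigModule R k n r))
    (f : MixedAlg R k n) (α : SigModule R k n r) : Prop :=
  ∃ g β, (g, β) ∈ G ∧ ∃ (m : MMon k n) (c : R) (b : FreeMonoid (Fin n)), c ≠ 0 ∧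
    LTerm (trm m c * g * wrd b) = LTerm f ∧
    LMb (f - trm m c * g * wrd b) < LMb f ∧
    sigb (scaleLR m c β b) ≤ sigb α

/-- `f^{[α]}` is regular sig-reducible by `G`. -/
def RegSigReducible (G : Set (MixedAlg R k n × SigModule R k n r))
    (f : MixedAlg R k n) (α : SigModule R k n r) : Prop :=
  ∃ g β, (g, β) ∈ G ∧ ∃ (m : MMon k n) (c : R) (b : FreeMonoid (Fin n)), c ≠ 0 ∧
    LTerm (trm m c * g * wrd b) = LTerm f ∧
    LMb (f - trm m c * g * wrd b) < LMb f ∧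
    sigb (scaleLR m c β b) < sigb α

/-- `f^{[α]}` is super reducible by `G`: there are `g^{[β]} ∈ G`, a term `t` and
a word `b` with `sig(α) = sig(t β b)` (as terms) and `LM(f) = LM(t g b)`. -/
def SuperReducible [NeZero r] (G : Set (MixedAlg R k n × SigModule R k n r))
    (f : MixedAlg R k n) (α : SigModule R k n r) : Prop :=
  ∃ g β, (g, β) ∈ G ∧ ∃ (m : MMon k n) (c : R) (b : FreeMonoid (Fin n)), c ≠ 0 ∧
    sigT α = sigT (scaleLR m c β b) ∧
    LMb f = LMb (trm m c * g * wrd b)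

/-- `α ∈ Σ` is (top) reducible by the set `H ⊆ Σ`: `sig(α) = sig(t γ b)` for
some `γ ∈ H`, term `t` and word `b`. -/
def ModReducible [NeZero r] (H : Set (SigModule R k n r)) (α : SigModule R k n r) : Prop :=
  ∃ γ ∈ H, ∃ (m : MMon k n) (c : R) (b : FreeMonoid (Fin n)), c ≠ 0 ∧
    sigT α = sigT (scaleLR m c γ b)

/-- `G` is a (strong) signature Gröbner basis of `I^{[Σ]}`. -/
def IsSigGB (F : Fin r → MixedAlg R k n) (G : Set (MixedAlg R k n × SigModule R k n r)) :
    Prop :=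
  ∀ f α, barMap F α = f → f ≠ 0 → SigReducible G f α

/-- `G` is a signature Gröbner basis of `I^{[Σ]}` up to (module monomial)
signature `σ`. -/
def IsSigGBUpTo (F : Fin r → MixedAlg R k n)
    (G : Set (MixedAlg R k n × SigModule R k n r)) (σ : WithBot (ModMon k n r)) : Prop :=
  ∀ f α, barMap F α = f → f ≠ 0 → sigb α < σ → SigReducible G f α

/-- `H` is a syzygy basis of `I^{[Σ]}`. -/
def IsSyzBasis [NeZero r] (F : Fin r → MixedAlg R k n) (H : Set (SigModule R k n r)) :
    Prop :=
  ∀ γ, IsSyzygy F γ → γ ≠ 0 → ModReducible H γ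

variable [IsDomain R] [GCDMonoid R] [NeZero r]

/-- `G` is complete: the G-polynomials (w.r.t. non-singular Bézout coefficients)
of all ambiguities of `G` are sig-reducible by `G`. -/
def CompleteSet (G : Set (MixedAlg R k n × SigModule R k n r)) : Prop :=
  ∀ g₁ β₁ g₂ β₂, (g₁, β₁) ∈ G → (g₂, β₂) ∈ G →
    ∀ m₁ n₁ m₂ n₂, IsAmb g₁ g₂ m₁ n₁ m₂ n₂ →
      ∀ c d, BezoutFor c d g₁ g₂ →
        sigb (GPolM c d β₁ β₂ m₁ n₁ m₂ n₂) = sigb (ambSIG g₁ g₂ β₁ β₂ m₁ n₁ m₂ n₂) →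
        SigReducible G (GPolP c d g₁ g₂ m₁ n₁ m₂ n₂) (GPolM c d β₁ β₂ m₁ n₁ m₂ n₂)

/-- `MonLcm σ₁ σ₂ τ`: the least common multiple `lcm(σ₁,σ₂)` of the module
monomials `σ₁ = u₁a₁ε_jb₁`, `σ₂ = u₂a₂ε_jb₂` is defined and equals `τ`. -/
def MonLcm (σ₁ σ₂ τ : ModMon k n r) : Prop :=
  σ₁.i = σ₂.i ∧ τ.i = σ₁.i ∧ τ.u = σ₁.u ⊔ σ₂.u ∧
  ((τ.a = σ₁.a ∧ ∃ s, σ₁.a = s * σ₂.a) ∨ (τ.a = σ₂.a ∧ ∃ s, σ₂.a = s * σ₁.a)) ∧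
  ((τ.b = σ₁.b ∧ ∃ s, σ₁.b = σ₂.b * s) ∨ (τ.b = σ₂.b ∧ ∃ s, σ₂.b = σ₁.b * s))

/-- `H` is sig-complete: all sig-Combinations of elements of `H` are reducible
by `H`. -/
def SigCompleteSet (H : Set (SigModule R k n r)) : Prop :=
  ∀ γ₁ ∈ H, ∀ γ₂ ∈ H, ∀ τ, MonLcm (sigMd γ₁) (sigMd γ₂) τ →
    ∀ (m₁ : MMon k n) (b₁ : FreeMonoid (Fin n)) (m₂ : MMon k n) (b₂ : FreeMonoid (Fin n)),
      mulLR m₁ (sigMd γ₁) b₁ = τ → mulLR m₂ (sigMd γ₂) b₂ = τ →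
      ∀ c d : R, c * sigC γ₁ + d * sigC γ₂ = gcd (sigC γ₁) (sigC γ₂) →
        ModReducible H (scaleLR m₁ c γ₁ b₁ + scaleLR m₂ d γ₂ b₂)

/-- The ambiguity `a` (of `g₁^{[β₁]}`, `g₂^{[β₂]}`), with signature `SIG(a)` and
leading monomial `LM(a)`, is covered by `(G, H)`: there are `g^{[β]} ∈ G`,
`γ ∈ H`, terms `t, t'` (possibly `0`) and words `b, b'` with
`SIG(a) = sig(t β b) + sig(t' γ b')` and `LM(t g b) < LM(a)`. -/
def CoveredBy (G : Set (MixedAlg R k n × SigModule R k n r))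
    (H : Set (SigModule R k n r)) (Sig : SigModule R k n r) (Lm : MMon k n) : Prop :=
  ∃ g β, (g, β) ∈ G ∧ ∃ γ ∈ H,
    ∃ (m : MMon k n) (c : R) (b : FreeMonoid (Fin n))
      (m' : MMon k n) (c' : R) (b' : FreeMonoid (Fin n)),
      Sig = sigT (scaleLR m c β b) + sigT (scaleLR m' c' γ b') ∧
      LMb (trm m c * g * wrd b) < (Lm : WithBot (MMon k n))

end Red

/-!
Both summands `c_f m₁ f n₁` and `c_g m₂ g n₂` of an S-polynomial have leading term
`lcmlc(f,g)·LM(a)`, which cancels in their difference. On the module side, the signature of a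
difference `A - B` is the larger of `sig A` and `sig B` unless the two coincide as terms, in which
case they cancel and the signature drops. Multiplying by the nonzero constants `c_f`, `c_g` does not
move signature monomials, so for `A = c_f m₁ α n₁` and `B = c_g m₂ β n₂` regularity of the
ambiguity is exactly `sig A ≄ sig B`.
-/
lemma Finset.max_lt_coe_iff {M : Type*} [LinearOrder M] {s : Finset M} {a : M} :
    s.max < (a : WithBot M) ↔ ∀ x ∈ s, x < a := by
  rw [Finset.max_eq_sup_coe, Finset.sup_lt_iff (WithBot.bot_lt_coe a)]
  simp only [WithBot.coe_lt_coe]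

lemma Finset.max_image_of_monotone {M N : Type*} [LinearOrder M] [LinearOrder N]
    {φ : M → N} (hφ : Monotone φ) (s : Finset M) :
    (s.image φ).max = s.max.map φ := by
  rcases s.eq_empty_or_nonempty with rfl | hs
  · simp
  · rw [← Finset.coe_max' hs, ← Finset.coe_max' (hs.image φ), WithBot.map_coe,
      Finset.max'_image hφ]

namespace Finsupp

variable {M G : Type*} [LinearOrder M] [AddGroup G]

lemma support_max_sub_le (A B : M →₀ G) :
    (A - B).support.max ≤ max A.support.max B.support.max := by
  rw [← Finset.max_union]
  exact Finset.max_mono support_sub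

lemma support_max_sub_lt {A B : M →₀ G} {μ : M} (hA : A.support.max ≤ μ)
    (hB : B.support.max ≤ μ) (h : A μ = B μ) : (A - B).support.max < μ := by
  refine Finset.max_lt_coe_iff.2 fun x hx => lt_of_le_of_ne ?_ ?_
  · exact WithBot.coe_le_coe.1
      ((Finset.le_max hx).trans ((support_max_sub_le A B).trans (max_le hA hB)))
  · rintro rfl
    exact mem_support_iff.1 hx (by rw [sub_apply, h, sub_self])

lemma support_max_smul_mapDomain {N R : Type*} [LinearOrder N] [CommRing R] [IsDomain R]
    {φ : M → N} (hφ : StrictMono φ) {c : R} (hc : c ≠ 0) (v : M →₀ R) :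
    (c • v.mapDomain φ).support.max = v.support.max.map φ := by
  rw [support_smul_eq hc, mapDomain_support_of_injective hφ.injective,
    Finset.max_image_of_monotone hφ.monotone]

end Finsupp

section Signature

variable {R : Type} [CommRing R] {k n r : ℕ} [LinearOrder (ModMon k n r)]

lemma sigb_eq_bot_iff {α : SigModule R k n r} : sigb α = ⊥ ↔ α = 0 := by
  rw [sigb, Finset.max_eq_bot, Finsupp.support_eq_empty]

lemma apply_ne_zero_of_sigb_eq {α : SigModule R k n r} {τ : ModMon k n r}
    (h : sigb α = τ) : α τ ≠ 0 :=
  Finsupp.mem_support_iff.1 (Finset.mem_of_max h)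

lemma sigb_neg (α : SigModule R k n r) : sigb (-α) = sigb α := by
  rw [sigb, sigb, Finsupp.support_neg]

variable [NeZero r]

lemma sigT_eq_single {α : SigModule R k n r} {τ : ModMon k n r} (h : sigb α = τ) :
    sigT α = Finsupp.single τ (α τ) := by
  have hτ : sigMd α = τ := by rw [sigMd, ← sigb, h]; rfl
  rw [sigT, sigC, hτ]

lemma sigT_zero : sigT (0 : SigModule R k n r) = 0 := by
  rw [sigT, sigC, Finsupp.zero_apply, Finsupp.single_zero]

lemma sigb_sigT (α : SigModule R k n r) : sigb (sigT α) = sigb α := by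
  cases h : sigb α with
  | bot => rw [sigb_eq_bot_iff.1 h, sigT_zero, sigb_eq_bot_iff]
  | coe τ =>
    rw [sigT_eq_single h, sigb, Finsupp.support_single _ (apply_ne_zero_of_sigb_eq h),
      Finset.max_singleton]

lemma sigT_neg (α : SigModule R k n r) : sigT (-α) = -sigT α := by
  cases h : sigb α with
  | bot => rw [sigb_eq_bot_iff.1 h, neg_zero, sigT_zero, neg_zero]
  | coe τ =>
    rw [sigT_eq_single h, sigT_eq_single ((sigb_neg α).trans h), Finsupp.neg_apply,
      Finsupp.single_neg]

lemma sigT_sub_of_sigb_lt {A B : SigModule R k n r} (h : sigb B < sigb A) :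
    sigT (A - B) = sigT A := by
  obtain ⟨τ, hτ⟩ := WithBot.ne_bot_iff_exists.1 h.ne_bot
  have hBτ : B τ = 0 := Finsupp.notMem_support_iff.1 (Finset.notMem_of_max_lt_coe (hτ ▸ h))
  have hABτ : (A - B) τ = A τ := by rw [Finsupp.sub_apply, hBτ, sub_zero]
  have hsig : sigb (A - B) = τ := by
    refine le_antisymm ?_ (Finset.le_max (Finsupp.mem_support_iff.2 ?_))
    · exact (Finsupp.support_max_sub_le A B).trans (max_le hτ.ge (hτ ▸ h.le))
    · exact hABτ ▸ apply_ne_zero_of_sigb_eq hτ.symm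
  rw [sigT_eq_single hsig, sigT_eq_single hτ.symm, hABτ]

lemma sigT_sub_of_sigb_gt {A B : SigModule R k n r} (h : sigb A < sigb B) :
    sigT (A - B) = -sigT B := by
  rw [← neg_sub, sigT_neg, sigT_sub_of_sigb_lt h]

lemma sigb_sub_eq_max_of_sigb_ne {A B : SigModule R k n r} (h : sigb A ≠ sigb B) :
    sigb (A - B) = max (sigb A) (sigb B) := by
  rcases h.lt_or_gt with h | h
  · rw [← sigb_sigT, sigT_sub_of_sigb_gt h, sigb_neg, sigb_sigT, max_eq_right h.le]
  · rw [← sigb_sigT, sigT_sub_of_sigb_lt h, sigb_sigT, max_eq_left h.le]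

lemma sigb_sub_lt_max_iff {A B : SigModule R k n r} (hA : A ≠ 0) :
    sigb (A - B) < max (sigb A) (sigb B) ↔ sigT A = sigT B := by
  obtain ⟨τ, hτ⟩ := WithBot.ne_bot_iff_exists.1 (mt sigb_eq_bot_iff.1 hA)
  constructor
  · intro hlt
    by_contra hne
    by_cases hAB : sigb A = sigb B
    · rw [sigT_eq_single hτ.symm, sigT_eq_single (hAB ▸ hτ.symm),
        (Finsupp.single_injective τ).eq_iff, ← sub_eq_zero] at hne
      have hτmem : τ ∈ (A - B).support := Finsupp.mem_support_iff.2 hne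
      rw [← hAB, max_self, ← hτ] at hlt
      exact (Finset.le_max hτmem).not_gt hlt
    · exact hlt.ne (sigb_sub_eq_max_of_sigb_ne hAB)
  · intro heq
    have hAB : sigb A = sigb B := by rw [← sigb_sigT, heq, sigb_sigT]
    have hval : A τ = B τ := by
      simpa [sigT_eq_single hτ.symm, sigT_eq_single (hAB ▸ hτ.symm)] using
        congrArg (· τ) heq
    rw [← hAB, max_self, ← hτ]
    exact Finsupp.support_max_sub_lt hτ.ge (hτ ▸ hAB.ge) hval

noncomputable def sigMax (A B : SigModule R k n r) : SigModule R k n r :=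
  if sigb B ≤ sigb A then sigT A else -sigT B

lemma sigb_sigMax (A B : SigModule R k n r) : sigb (sigMax A B) = max (sigb A) (sigb B) := by
  unfold sigMax
  split_ifs with h
  · rw [sigb_sigT, max_eq_left h]
  · rw [sigb_neg, sigb_sigT, max_eq_right (not_le.1 h).le]

lemma sigb_sub_le_sigb_sigMax (A B : SigModule R k n r) :
    sigb (A - B) ≤ sigb (sigMax A B) :=
  sigb_sigMax A B ▸ Finsupp.support_max_sub_le A B

lemma sigb_sub_lt_sigb_sigMax_iff {A B : SigModule R k n r} (hA : A ≠ 0) :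
    sigb (A - B) < sigb (sigMax A B) ↔ sigT A = sigT B :=
  sigb_sigMax A B ▸ sigb_sub_lt_max_iff hA

lemma sigT_sub_eq_sigMax_iff {A B : SigModule R k n r} (hA : A ≠ 0) :
    sigT (A - B) = sigMax A B ↔ sigb A ≠ sigb B := by
  constructor
  · intro h hAB
    obtain ⟨τ, hτ⟩ := WithBot.ne_bot_iff_exists.1 (mt sigb_eq_bot_iff.1 hA)
    rw [sigMax, if_pos hAB.ge] at h
    have hsig : sigb (A - B) = τ := by rw [← sigb_sigT, h, sigb_sigT, hτ]
    have hval := congrArg (· τ) h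
    simp only [sigT_eq_single hsig, sigT_eq_single hτ.symm, Finsupp.single_eq_same,
      Finsupp.sub_apply, sub_eq_self] at hval
    exact apply_ne_zero_of_sigb_eq (hAB ▸ hτ.symm) hval
  · intro hAB
    rcases hAB.lt_or_gt with h | h
    · rw [sigMax, if_neg (not_le.2 h), sigT_sub_of_sigb_gt h]
    · rw [sigMax, if_pos h.le, sigT_sub_of_sigb_lt h]

end Signature

section Multiples

variable {R : Type} [CommRing R] {k n r : ℕ}

lemma MMon.mul_mul_injective (m b : MMon k n) :
    Function.Injective (fun x : MMon k n => m * x * b) := by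
  intro x y h
  have hc : m.c + x.c + b.c = m.c + y.c + b.c := congrArg MMon.c h
  have hw : m.w * x.w * b.w = m.w * y.w * b.w := congrArg MMon.w h
  ext : 1
  · exact add_left_cancel (add_right_cancel hc)
  · exact mul_left_cancel (mul_right_cancel hw)

lemma mulLR_injective (m : MMon k n) (b : FreeMonoid (Fin n)) :
    Function.Injective (fun σ : ModMon k n r => mulLR m σ b) := by
  intro σ τ h
  obtain ⟨hu, ha, hi, hb⟩ := ModMon.mk.inj h
  ext : 1
  · exact add_left_cancel hu
  · exact mul_left_cancel ha
  · exact hi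
  · exact mul_right_cancel hb

lemma coeff_trm_mul_mul_wrd (m : MMon k n) (c : R) (f : MixedAlg R k n)
    (b : FreeMonoid (Fin n)) :
    (trm m c * f * wrd b).coeff = c • f.coeff.mapDomain (fun x => m * x * ⟨0, b⟩) := by
  induction f using MonoidAlgebra.induction_linear with
  | zero => rw [mul_zero, zero_mul, MonoidAlgebra.coeff_zero, Finsupp.mapDomain_zero, smul_zero]
  | add p q hp hq =>
    rw [mul_add, add_mul, MonoidAlgebra.coeff_add, hp, hq, MonoidAlgebra.coeff_add,
      Finsupp.mapDomain_add, smul_add]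
  | single x d =>
    rw [trm, wrd, MonoidAlgebra.single_mul_single, MonoidAlgebra.single_mul_single,
      MonoidAlgebra.coeff_single, MonoidAlgebra.coeff_single, Finsupp.mapDomain_single,
      Finsupp.smul_single, mul_one, smul_eq_mul]

lemma coeff_trm_mul_mul_wrd_apply (m : MMon k n) (c : R) (f : MixedAlg R k n)
    (b : FreeMonoid (Fin n)) (x : MMon k n) :
    (trm m c * f * wrd b).coeff (m * x * (⟨0, b⟩ : MMon k n)) = c * f.coeff x := by
  rw [coeff_trm_mul_mul_wrd, Finsupp.smul_apply,
    Finsupp.mapDomain_apply (MMon.mul_mul_injective m _), smul_eq_mul]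

lemma scaleLR_eq_smul_mapDomain (m : MMon k n) (c : R) (α : SigModule R k n r)
    (b : FreeMonoid (Fin n)) :
    scaleLR m c α b = c • α.mapDomain (fun σ => mulLR m σ b) := by
  rw [scaleLR, Finsupp.mapDomain, Finsupp.smul_sum]
  simp only [Finsupp.smul_single, smul_eq_mul]

variable [IsDomain R]

lemma scaleLR_ne_zero (m : MMon k n) {c : R} (hc : c ≠ 0) {α : SigModule R k n r}
    (hα : α ≠ 0) (b : FreeMonoid (Fin n)) : scaleLR m c α b ≠ 0 := by
  rw [scaleLR_eq_smul_mapDomain]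
  refine smul_ne_zero hc fun h => hα (Finsupp.mapDomain_injective (mulLR_injective m b) ?_)
  rw [h, Finsupp.mapDomain_zero]

lemma LMb_trm_mul_mul_wrd [LinearOrder (MMon k n)]
    (hmul : ∀ a b m m' : MMon k n, m ≤ m' → a * m * b ≤ a * m' * b)
    (m : MMon k n) {c : R} (hc : c ≠ 0) (f : MixedAlg R k n) (b : FreeMonoid (Fin n)) :
    LMb (trm m c * f * wrd b) = (LMb f).map (fun x => m * x * ⟨0, b⟩) := by
  have hφ : Monotone (fun x : MMon k n => m * x * ⟨0, b⟩) := hmul m ⟨0, b⟩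
  rw [LMb, coeff_trm_mul_mul_wrd, Finsupp.support_max_smul_mapDomain
    (hφ.strictMono_of_injective (MMon.mul_mul_injective m _)) hc, LMb]

lemma sigb_scaleLR [LinearOrder (ModMon k n r)]
    (hmul : ∀ (m : MMon k n) (b : FreeMonoid (Fin n)) (σ τ : ModMon k n r),
      σ ≤ τ → mulLR m σ b ≤ mulLR m τ b)
    (m : MMon k n) {c : R} (hc : c ≠ 0) (α : SigModule R k n r) (b : FreeMonoid (Fin n)) :
    sigb (scaleLR m c α b) = (sigb α).map (fun σ => mulLR m σ b) := by
  have hψ : Monotone (fun σ : ModMon k n r => mulLR m σ b) := hmul m b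
  rw [sigb, scaleLR_eq_smul_mapDomain, Finsupp.support_max_smul_mapDomain
    (hψ.strictMono_of_injective (mulLR_injective m b)) hc, sigb]

end Multiples

section SPolynomial

variable {R : Type} [CommRing R] {k n : ℕ} [LinearOrder (MMon k n)]

lemma LMb_eq_LMd {f : MixedAlg R k n} (hf : f ≠ 0) : LMb f = LMd f := by
  obtain ⟨μ, hμ⟩ := Finset.max_of_nonempty
    (Finsupp.support_nonempty_iff.2 (mt MonoidAlgebra.coeff_eq_zero.1 hf))
  rw [LMb, LMd, hμ]
  rfl

lemma LC_ne_zero {f : MixedAlg R k n} (hf : f ≠ 0) : LC f ≠ 0 :=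
  Finsupp.mem_support_iff.1 (Finset.mem_of_max (LMb_eq_LMd hf))

lemma IsAmb.ambLM_eq {f g : MixedAlg R k n} {m₁ : MMon k n} {n₁ : FreeMonoid (Fin n)}
    {m₂ : MMon k n} {n₂ : FreeMonoid (Fin n)} (ha : IsAmb f g m₁ n₁ m₂ n₂) :
    ambLM f m₁ n₁ = m₂ * LMd g * ⟨0, n₂⟩ := by
  obtain ⟨a, b, c, d, hw, rfl, rfl, rfl, rfl⟩ := ha
  ext : 1
  · show (LMd f).c ⊔ (LMd g).c - (LMd f).c + (LMd f).c + 0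
        = (LMd f).c ⊔ (LMd g).c - (LMd g).c + (LMd g).c + 0
    rw [tsub_add_cancel_of_le le_sup_left, tsub_add_cancel_of_le le_sup_right]
  · simp only [ambLM, MMon.mul_w]
    cases hw with
    | overlap₁ a b p q h => rw [mul_one, one_mul, h]
    | overlap₂ a b p q h => rw [one_mul, mul_one, h]
    | inclusion₁ a b p q h => rw [one_mul, mul_one, h]
    | inclusion₂ a b p q h => rw [one_mul, mul_one, h]
    | external₁ m p q => rw [one_mul, mul_one, mul_assoc]
    | external₂ m p q => rw [mul_one, one_mul, mul_assoc]

variable [GCDMonoid R]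

lemma LC_mul_cofL (f g : MixedAlg R k n) : LC f * cofL f g = lcm (LC f) (LC g) :=
  (Classical.choose_spec (dvd_lcm_left (LC f) (LC g))).symm

lemma LC_mul_cofR (f g : MixedAlg R k n) : LC g * cofR f g = lcm (LC f) (LC g) :=
  (Classical.choose_spec (dvd_lcm_right (LC f) (LC g))).symm

lemma cofL_ne_zero {f g : MixedAlg R k n} (hf : f ≠ 0) (hg : g ≠ 0) : cofL f g ≠ 0 :=
  right_ne_zero_of_mul ((LC_mul_cofL f g ▸ lcm_ne_zero_iff.2 ⟨LC_ne_zero hf, LC_ne_zero hg⟩))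

lemma cofR_ne_zero {f g : MixedAlg R k n} (hf : f ≠ 0) (hg : g ≠ 0) : cofR f g ≠ 0 :=
  right_ne_zero_of_mul ((LC_mul_cofR f g ▸ lcm_ne_zero_iff.2 ⟨LC_ne_zero hf, LC_ne_zero hg⟩))

variable [IsDomain R]

lemma LMb_SPolP_lt (hmul : ∀ a b m m' : MMon k n, m ≤ m' → a * m * b ≤ a * m' * b)
    {f g : MixedAlg R k n} (hf : f ≠ 0) (hg : g ≠ 0) {m₁ : MMon k n} {n₁ : FreeMonoid (Fin n)}
    {m₂ : MMon k n} {n₂ : FreeMonoid (Fin n)} (ha : IsAmb f g m₁ n₁ m₂ n₂) :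
    LMb (SPolP f g m₁ n₁ m₂ n₂) < (ambLM f m₁ n₁ : WithBot (MMon k n)) := by
  have h₁ : LMb (trm m₁ (cofL f g) * f * wrd n₁) = ambLM f m₁ n₁ := by
    rw [LMb_trm_mul_mul_wrd hmul m₁ (cofL_ne_zero hf hg), LMb_eq_LMd hf]
    rfl
  have h₂ : LMb (trm m₂ (cofR f g) * g * wrd n₂) = ambLM f m₁ n₁ := by
    rw [LMb_trm_mul_mul_wrd hmul m₂ (cofR_ne_zero hf hg), LMb_eq_LMd hg, ha.ambLM_eq]
    rfl
  rw [SPolP, LMb, MonoidAlgebra.coeff_sub]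
  refine Finsupp.support_max_sub_lt h₁.le h₂.le ?_
  rw [ambLM, coeff_trm_mul_mul_wrd_apply, ← ambLM, ha.ambLM_eq, coeff_trm_mul_mul_wrd_apply,
      ← LC, ← LC, mul_comm, LC_mul_cofL, mul_comm, LC_mul_cofR]

end SPolynomial

theorem spol_properties_general
    {R : Type} [CommRing R] [IsDomain R] [GCDMonoid R]
    {k n r : ℕ} [NeZero r]
    [LinearOrder (MMon k n)] [LinearOrder (ModMon k n r)]
    (hord : IsOrderSetting k n r)
    (F : Fin r → MixedAlg R k n)
    (f g : MixedAlg R k n) (α β : SigModule R k n r)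
    (hlabf : barMap F α = f)
    (hf : f ≠ 0) (hg : g ≠ 0)
    (m₁ : MMon k n) (n₁ : FreeMonoid (Fin n)) (m₂ : MMon k n) (n₂ : FreeMonoid (Fin n))
    (ha : IsAmb f g m₁ n₁ m₂ n₂) :
    LMb (SPolP f g m₁ n₁ m₂ n₂) < (ambLM f m₁ n₁ : WithBot (MMon k n)) ∧
    sigb (SPolM f g α β m₁ n₁ m₂ n₂) ≤ sigb (ambSIG f g α β m₁ n₁ m₂ n₂) ∧
    (sigT (SPolM f g α β m₁ n₁ m₂ n₂) = ambSIG f g α β m₁ n₁ m₂ n₂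
        ↔ RegAmb α β m₁ n₁ m₂ n₂) ∧
    (sigb (SPolM f g α β m₁ n₁ m₂ n₂) < sigb (ambSIG f g α β m₁ n₁ m₂ n₂)
        ↔ SingAmb f g α β m₁ n₁ m₂ n₂) := by
  have hα : α ≠ 0 := by
    rintro rfl
    exact hf (by rw [← hlabf, barMap, Finsupp.sum_zero_index])
  have hcL := cofL_ne_zero hf hg
  have hcR := cofR_ne_zero hf hg
  have hA := scaleLR_ne_zero m₁ hcL hα n₁
  have hreg : RegAmb α β m₁ n₁ m₂ n₂ ↔
      sigb (scaleLR m₁ (cofL f g) α n₁) ≠ sigb (scaleLR m₂ (cofR f g) β n₂) := by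
    rw [RegAmb, sigb_scaleLR hord.mod_mul m₁ one_ne_zero, sigb_scaleLR hord.mod_mul m₂ one_ne_zero,
      sigb_scaleLR hord.mod_mul m₁ hcL, sigb_scaleLR hord.mod_mul m₂ hcR]
  exact ⟨LMb_SPolP_lt hord.mon_mul hf hg ha, sigb_sub_le_sigb_sigMax _ _,
    (sigT_sub_eq_sigMax_iff hA).trans hreg.symm, sigb_sub_lt_sigb_sigMax_iff hA⟩

/-- properties of S-polynomials.  For `h^{[γ]} = S-Pol(a)`:
`LM(h) < LM(a)` and `sig(γ) ⪯ SIG(a)`, with equality (of terms) if and only if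
the ambiguity `a` is regular, and `sig(γ) ≺ SIG(a)` if and only if `a` is
singular. -/
theorem spol_properties
    {R : Type} [CommRing R] [IsDomain R] [IsPrincipalIdealRing R] [GCDMonoid R]
    {k n r : ℕ} [NeZero r]
    [LinearOrder (MMon k n)] [LinearOrder (ModMon k n r)]
    (hord : IsOrderSetting k n r)
    (F : Fin r → MixedAlg R k n)
    (f g : MixedAlg R k n) (α β : SigModule R k n r)
    (hlabf : barMap F α = f) (hlabg : barMap F β = g)
    (hf : f ≠ 0) (hg : g ≠ 0)
    (m₁ : MMon k n) (n₁ : FreeMonoid (Fin n)) (m₂ : MMon k n) (n₂ : FreeMonoid (Fin n))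
    (ha : IsAmb f g m₁ n₁ m₂ n₂) :
    LMb (SPolP f g m₁ n₁ m₂ n₂) < (ambLM f m₁ n₁ : WithBot (MMon k n)) ∧
    sigb (SPolM f g α β m₁ n₁ m₂ n₂) ≤ sigb (ambSIG f g α β m₁ n₁ m₂ n₂) ∧
    (sigT (SPolM f g α β m₁ n₁ m₂ n₂) = ambSIG f g α β m₁ n₁ m₂ n₂
        ↔ RegAmb α β m₁ n₁ m₂ n₂) ∧
    (sigb (SPolM f g α β m₁ n₁ m₂ n₂) < sigb (ambSIG f g α β m₁ n₁ m₂ n₂)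
        ↔ SingAmb f g α β m₁ n₁ m₂ n₂) :=
  spol_properties_general hord F f g α β hlabf hf hg m₁ n₁ m₂ n₂ ha
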